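/- Let α ≥ 0 be a real constant and let f : [0,1] → ℝ be a continuously differentiable function that is not identically zero. Then the Rayleigh–Ritz ratio satisfies the lower bound (α·(f(0)² + f(1)²) + ∫₀¹ (f′(z))² dz) / (∫₀¹ f(z)² dz) ≥ ((−α + √(α² + 8π²α)) / (4π))². -/

import Mathlib

/-!
For `0 ≤ μ`, the Riccati function `φ z = -μ tan (μ (z - 1/2))` solves `φ' = -μ² - φ²` on
`[0, 1]` as long as `μ < π`, and then `(φ f²)' = f'² - μ² f² - (f' - φ f)²`. Integrating gives
`μ² ∫ f² ≤ ∫ f'² + μ tan (μ/2) (f(0)² + f(1)²)`, so it remains to check `μ tan (μ/2) ≤ α`.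
Jordan's inequality `cos x ≥ 1 - 2x/π` bounds `tan x` by `π x / (π - 2x)`, and for the root `μ`
of `2π μ² = α (π - μ)`, whose square is the stated bound, this gives
`μ tan (μ/2) ≤ π μ² / (2 (π - μ)) = α / 4`.
-/

open Real Set

theorem Real.tan_le_pi_mul_div {x : ℝ} (hx₀ : 0 ≤ x) (hx : x < π / 2) :
    tan x ≤ π * x / (π - 2 * x) := by
  have hcos : (π - 2 * x) / π ≤ cos x := by
    have := mul_le_sin (x := π / 2 - x) (by linarith) (by linarith)
    rw [sin_pi_div_two_sub] at this
    calc (π - 2 * x) / π = 2 / π * (π / 2 - x) := by field_simp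
      _ ≤ cos x := this
  have hpos : 0 < (π - 2 * x) / π := div_pos (by linarith) pi_pos
  calc tan x = sin x / cos x := tan_eq_sin_div_cos x
    _ ≤ x / ((π - 2 * x) / π) := div_le_div₀ hx₀ (sin_le hx₀) hpos hcos
    _ = π * x / (π - 2 * x) := by field_simp

theorem hasDerivAt_neg_mul_tan {μ c z : ℝ} (hz : cos (μ * (z - c)) ≠ 0) :
    HasDerivAt (fun z => -μ * tan (μ * (z - c))) (-μ ^ 2 - (-μ * tan (μ * (z - c))) ^ 2) z := by
  have hlin : HasDerivAt (fun z : ℝ => μ * (z - c)) μ z := by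
    simpa using ((hasDerivAt_id z).sub_const c).const_mul μ
  refine (((hasDerivAt_tan hz).comp z hlin).const_mul (-μ)).congr_deriv ?_
  rw [one_div, ← inv_one_add_tan_sq hz, inv_inv]
  ring

theorem mul_integral_sq_le_of_riccati {a b k : ℝ} (hab : a ≤ b) {f f' φ : ℝ → ℝ}
    (hf : ∀ z ∈ Icc a b, HasDerivAt f (f' z) z) (hf' : ContinuousOn f' (Icc a b))
    (hφ : ∀ z ∈ Icc a b, HasDerivAt φ (-k - φ z ^ 2) z) :
    k * ∫ z in a..b, f z ^ 2 ≤ (∫ z in a..b, f' z ^ 2) + φ a * f a ^ 2 - φ b * f b ^ 2 := by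
  have hfc : ContinuousOn f (Icc a b) := fun z hz => (hf z hz).continuousAt.continuousWithinAt
  have hφc : ContinuousOn φ (Icc a b) := fun z hz => (hφ z hz).continuousAt.continuousWithinAt
  have hIcc : uIcc a b = Icc a b := uIcc_of_le hab
  have hderiv : ∀ z ∈ uIcc a b, HasDerivAt (fun z => φ z * f z ^ 2)
      (f' z ^ 2 - k * f z ^ 2 - (f' z - φ z * f z) ^ 2) z := by
    rw [hIcc]
    intro z hz
    refine ((hφ z hz).mul ((hf z hz).fun_pow 2)).congr_deriv ?_
    ring
  have hcont : ContinuousOn (fun z => f' z ^ 2 - k * f z ^ 2 - (f' z - φ z * f z) ^ 2)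
      (uIcc a b) := by
    rw [hIcc]; fun_prop
  have hftc := intervalIntegral.integral_eq_sub_of_hasDerivAt hderiv hcont.intervalIntegrable
  have hmono : (∫ z in a..b, (f' z ^ 2 - k * f z ^ 2 - (f' z - φ z * f z) ^ 2)) ≤
      ∫ z in a..b, (f' z ^ 2 - k * f z ^ 2) := by
    refine intervalIntegral.integral_mono_on hab hcont.intervalIntegrable ?_ fun z _ => ?_
    · exact ContinuousOn.intervalIntegrable (by rw [hIcc]; fun_prop)
    · nlinarith [sq_nonneg (f' z - φ z * f z)]
  have hsplit : (∫ z in a..b, (f' z ^ 2 - k * f z ^ 2)) =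
      (∫ z in a..b, f' z ^ 2) - k * ∫ z in a..b, f z ^ 2 := by
    rw [intervalIntegral.integral_sub, intervalIntegral.integral_const_mul]
    all_goals exact ContinuousOn.intervalIntegrable (by rw [hIcc]; fun_prop)
  linarith

theorem integral_sq_pos_of_ne_zero {a b : ℝ} (hab : a < b) {f : ℝ → ℝ}
    (hf : ContinuousOn f (Icc a b)) (hne : ∃ z ∈ Icc a b, f z ≠ 0) : 0 < ∫ z in a..b, f z ^ 2 := by
  obtain ⟨z, hz, hfz⟩ := hne
  exact intervalIntegral.integral_pos hab (hf.pow 2) (fun _ _ => sq_nonneg _) ⟨z, hz, by positivity⟩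

noncomputable def robinRoot (α : ℝ) : ℝ := (-α + Real.sqrt (α ^ 2 + 8 * π ^ 2 * α)) / (4 * π)

section robinRoot

variable {α : ℝ} (hα : 0 ≤ α)
include hα

theorem robinRoot_nonneg : 0 ≤ robinRoot α := by
  have : α ≤ Real.sqrt (α ^ 2 + 8 * π ^ 2 * α) :=
    le_sqrt_of_sq_le (by nlinarith [sq_nonneg π])
  exact div_nonneg (by linarith) (by positivity)

theorem robinRoot_lt_pi : robinRoot α < π := by
  have : Real.sqrt (α ^ 2 + 8 * π ^ 2 * α) < α + 4 * π ^ 2 := by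
    rw [sqrt_lt' (by positivity)]
    nlinarith [pow_pos pi_pos 4]
  rw [robinRoot, div_lt_iff₀ (by positivity)]
  nlinarith [pi_gt_three]

theorem two_mul_pi_mul_robinRoot_sq : 2 * π * robinRoot α ^ 2 = α * (π - robinRoot α) := by
  have hs := sq_sqrt (by positivity : 0 ≤ α ^ 2 + 8 * π ^ 2 * α)
  rw [robinRoot]
  generalize Real.sqrt (α ^ 2 + 8 * π ^ 2 * α) = s at hs ⊢
  field_simp
  linear_combination 2 * hs

theorem robinRoot_mul_tan_half_le : robinRoot α * tan (robinRoot α / 2) ≤ α := by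
  have h₀ := robinRoot_nonneg hα
  have hπ := robinRoot_lt_pi hα
  calc robinRoot α * tan (robinRoot α / 2)
      ≤ robinRoot α * (π * (robinRoot α / 2) / (π - 2 * (robinRoot α / 2))) := by
        gcongr
        exact tan_le_pi_mul_div (by positivity) (by linarith)
    _ ≤ α := by
        rw [mul_div_cancel₀ _ two_ne_zero, mul_div_assoc', div_le_iff₀ (by linarith),
          ← two_mul_pi_mul_robinRoot_sq hα]
        nlinarith [pi_pos, sq_nonneg (robinRoot α)]

end robinRoot

/-- **Rayleigh–Ritz lower bound** (Lemma, Appendix B).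
For a non-negative constant `α` and a continuously differentiable trial
function `f` on `[0,1]` (with derivative `f'`) that is not identically zero,
the Rayleigh–Ritz ratio
`(α (f(0)² + f(1)²) + ∫₀¹ f'(z)² dz) / ∫₀¹ f(z)² dz`
is bounded below by `((−α + √(α² + 8π²α)) / (4π))²`. -/
theorem rayleigh_ritz_lower_bound
    (α : ℝ) (hα : 0 ≤ α) (f f' : ℝ → ℝ)
    (hderiv : ∀ z ∈ Set.Icc (0 : ℝ) 1, HasDerivAt f (f' z) z)
    (hcont : ContinuousOn f' (Set.Icc (0 : ℝ) 1))
    (hne : ∃ z ∈ Set.Icc (0 : ℝ) 1, f z ≠ 0) :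
    ((-α + Real.sqrt (α ^ 2 + 8 * Real.pi ^ 2 * α)) / (4 * Real.pi)) ^ 2 ≤
      (α * ((f 0) ^ 2 + (f 1) ^ 2) + ∫ z in (0 : ℝ)..1, (f' z) ^ 2) /
        (∫ z in (0 : ℝ)..1, (f z) ^ 2) := by
  change robinRoot α ^ 2 ≤ _
  set μ := robinRoot α
  have hμ₀ : 0 ≤ μ := robinRoot_nonneg hα
  have hμπ : μ < π := robinRoot_lt_pi hα
  have hφ : ∀ z ∈ Icc (0 : ℝ) 1, HasDerivAt (fun z => -μ * tan (μ * (z - 1 / 2)))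
      (-μ ^ 2 - (-μ * tan (μ * (z - 1 / 2))) ^ 2) z := fun z hz =>
    hasDerivAt_neg_mul_tan
      (cos_pos_of_mem_Ioo ⟨by nlinarith [hz.1, hz.2], by nlinarith [hz.1, hz.2]⟩).ne'
  have hpicone := mul_integral_sq_le_of_riccati zero_le_one hderiv hcont hφ
  have hboundary := robinRoot_mul_tan_half_le hα
  have hpos := integral_sq_pos_of_ne_zero one_pos
    (fun z hz => (hderiv z hz).continuousAt.continuousWithinAt) hne
  rw [show μ * (0 - 1 / 2) = -(μ / 2) by ring, show μ * (1 - 1 / 2) = μ / 2 by ring,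
    tan_neg] at hpicone
  rw [le_div_iff₀ hpos]
  nlinarith [mul_le_mul_of_nonneg_right hboundary
    (add_nonneg (sq_nonneg (f 0)) (sq_nonneg (f 1)))]
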